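/- arXiv:1704.00916 — 3 statements merged into one kernel-verified Lean document; each statement's English description precedes it below -/
import Mathlib

section
/- Let f be twice continuously differentiable on ℝⁿ \ {0} with Δf = 0. Then the Kelvin transform Kf(x) = ‖x‖^{2-n} f(x/‖x‖²) satisfies Δ(Kf) = 0 on ℝⁿ \ {0}. -/
/-!
Write the Kelvin transform as `‖x‖ ^ (2 - n) * (f ∘ σ) x`, with `σ x = x / ‖x‖²` the inversion in
the unit sphere. The weight `‖x‖ ^ (2 - n)` is harmonic away from `0`. The differential of `σ` at
`x` is `‖x‖⁻²` times a reflection, so the chain rule for Hessians gives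
`Δ(f ∘ σ)(x) = ‖x‖⁻⁴ (Δf(σ x) + (4 - 2n) Df(σ x) x)`, and the first-order term is cancelled by the
cross term `2 ⟪∇‖x‖ ^ (2 - n), ∇(f ∘ σ)(x)⟫` of the product rule. Hence
`Δ(Kf)(x) = ‖x‖ ^ (-n - 2) Δf(σ x)`, which vanishes when `f` is harmonic.
-/

open scoped RealInnerProductSpace Topology
open EuclideanGeometry

section SecondDerivative

variable {𝕜 : Type*} [NontriviallyNormedField 𝕜]
  {E F G : Type*} [NormedAddCommGroup E] [NormedSpace 𝕜 E]
  [NormedAddCommGroup F] [NormedSpace 𝕜 F] [NormedAddCommGroup G] [NormedSpace 𝕜 G]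
  {x : E}

theorem fderiv_fderiv_apply_eq {g : E → F} (hg : DifferentiableAt 𝕜 (fderiv 𝕜 g) x) (v w : E) :
    fderiv 𝕜 (fun y => fderiv 𝕜 g y w) x v = fderiv 𝕜 (fderiv 𝕜 g) x v w := by
  rw [fderiv_clm_apply hg (differentiableAt_const w)]
  simp

theorem ContDiffAt.differentiableAt_fderiv {g : E → F} (hg : ContDiffAt 𝕜 2 g x) :
    DifferentiableAt 𝕜 (fderiv 𝕜 g) x :=
  (hg.fderiv_right (m := 1) le_rfl).differentiableAt one_ne_zero

theorem ContDiffAt.eventually_differentiableAt {g : E → F} (hg : ContDiffAt 𝕜 2 g x) :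
    ∀ᶠ y in 𝓝 x, DifferentiableAt 𝕜 g y :=
  (hg.eventually (by simp)).mono fun _ hy => hy.differentiableAt two_ne_zero

theorem fderiv_fderiv_smul_apply {c : E → 𝕜} {g : E → F} (hc : ContDiffAt 𝕜 2 c x)
    (hg : ContDiffAt 𝕜 2 g x) (v w : E) :
    fderiv 𝕜 (fderiv 𝕜 fun y => c y • g y) x v w =
      c x • fderiv 𝕜 (fderiv 𝕜 g) x v w + fderiv 𝕜 c x v • fderiv 𝕜 g x w +
        fderiv 𝕜 c x w • fderiv 𝕜 g x v + fderiv 𝕜 (fderiv 𝕜 c) x v w • g x := by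
  have hDc := hc.differentiableAt_fderiv.clm_apply (differentiableAt_const w)
  have hDg := hg.differentiableAt_fderiv.clm_apply (differentiableAt_const w)
  have hfd : (fun y => fderiv 𝕜 (fun y => c y • g y) y w) =ᶠ[𝓝 x]
      fun y => c y • fderiv 𝕜 g y w + fderiv 𝕜 c y w • g y := by
    filter_upwards [hc.eventually_differentiableAt, hg.eventually_differentiableAt]
      with y hcy hgy
    simp [fderiv_fun_smul hcy hgy]
  have hcg : ContDiffAt 𝕜 2 (fun y => c y • g y) x := hc.smul hg
  have hsum := ((hc.differentiableAt two_ne_zero).hasFDerivAt.fun_smul hDg.hasFDerivAt).fun_add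
    (hDc.hasFDerivAt.fun_smul (hg.differentiableAt two_ne_zero).hasFDerivAt)
  rw [← fderiv_fderiv_apply_eq hcg.differentiableAt_fderiv, hfd.fderiv_eq, hsum.fderiv]
  simp only [add_apply, smul_apply, ContinuousLinearMap.smulRight_apply,
    fderiv_fderiv_apply_eq hc.differentiableAt_fderiv,
    fderiv_fderiv_apply_eq hg.differentiableAt_fderiv]
  abel

theorem fderiv_fderiv_comp_apply {f : F → G} {σ : E → F} (hf : ContDiffAt 𝕜 2 f (σ x))
    (hσ : ContDiffAt 𝕜 2 σ x) (v w : E) :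
    fderiv 𝕜 (fderiv 𝕜 (f ∘ σ)) x v w =
      fderiv 𝕜 (fderiv 𝕜 f) (σ x) (fderiv 𝕜 σ x v) (fderiv 𝕜 σ x w) +
        fderiv 𝕜 f (σ x) (fderiv 𝕜 (fderiv 𝕜 σ) x v w) := by
  have hfd : (fun y => fderiv 𝕜 (f ∘ σ) y w) =ᶠ[𝓝 x]
      fun y => fderiv 𝕜 f (σ y) (fderiv 𝕜 σ y w) := by
    filter_upwards [hσ.continuousAt.eventually hf.eventually_differentiableAt,
      hσ.eventually_differentiableAt] with y hfy hσy
    rw [fderiv_comp y hfy hσy]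
    rfl
  have hDf : HasFDerivAt (fun y => fderiv 𝕜 f (σ y))
      ((fderiv 𝕜 (fderiv 𝕜 f) (σ x)).comp (fderiv 𝕜 σ x)) x :=
    hf.differentiableAt_fderiv.hasFDerivAt.comp x (hσ.differentiableAt two_ne_zero).hasFDerivAt
  have hDσ := (hσ.differentiableAt_fderiv.clm_apply (differentiableAt_const w)).hasFDerivAt
  rw [← fderiv_fderiv_apply_eq (hf.comp x hσ).differentiableAt_fderiv, hfd.fderiv_eq,
    (hDf.clm_apply hDσ).fderiv]
  simp [fderiv_fderiv_apply_eq hσ.differentiableAt_fderiv, add_comm]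

end SecondDerivative

section OrthonormalBasis

variable {E F : Type*} [NormedAddCommGroup E] [InnerProductSpace ℝ E]
  [NormedAddCommGroup F] [NormedSpace ℝ F] {ι : Type*} [Fintype ι] (b : OrthonormalBasis ι ℝ E)

theorem OrthonormalBasis.sum_inner_self : ∑ i, ⟪b i, b i⟫ = Fintype.card ι := by
  simp [b.orthonormal.1]

theorem OrthonormalBasis.sum_mul_inner_smul (t : ℝ) (x : E) :
    ∑ i, (t * ⟪x, b i⟫) • b i = t • x := by
  conv_rhs => rw [← b.sum_repr' x, Finset.smul_sum]
  simp_rw [smul_smul, real_inner_comm x]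

theorem OrthonormalBasis.sum_apply_smul_reflection (B : E →L[ℝ] E →L[ℝ] F) (a : ℝ) (x : E) :
    ∑ i, B (a • (b i - (2 / ‖x‖ ^ 2 * ⟪x, b i⟫) • x)) (a • (b i - (2 / ‖x‖ ^ 2 * ⟪x, b i⟫) • x)) =
      a ^ 2 • ∑ i, B (b i) (b i) := by
  set t := 2 / ‖x‖ ^ 2
  have hss : ∑ i, (t * ⟪x, b i⟫) ^ 2 = t ^ 2 * ‖x‖ ^ 2 := by
    simp_rw [mul_pow, ← Finset.mul_sum, b.sum_sq_inner_left]
  have htx : (t ^ 2 * ‖x‖ ^ 2) • B x x = (2 * t) • B x x := by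
    rcases eq_or_ne x 0 with rfl | hx
    · simp
    · congr 1
      simp only [t]
      field_simp
  calc _ = a ^ 2 • (∑ i, B (b i) (b i) - B (∑ i, (t * ⟪x, b i⟫) • b i) x
        - B x (∑ i, (t * ⟪x, b i⟫) • b i) + (∑ i, (t * ⟪x, b i⟫) ^ 2) • B x x) := by
        simp only [map_sub, map_smul, map_sum, sub_apply,
          smul_apply, FunLike.coe_sum, Finset.sum_apply, Finset.sum_smul]
        rw [← Finset.sum_sub_distrib, ← Finset.sum_sub_distrib, ← Finset.sum_add_distrib,
          Finset.smul_sum]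
        refine Finset.sum_congr rfl fun i _ => ?_
        module
    _ = a ^ 2 • ∑ i, B (b i) (b i) := by
        rw [b.sum_mul_inner_smul, hss, htx]
        simp only [map_smul, smul_apply]
        module

end OrthonormalBasis

section NormSqRpow

variable {E : Type*} [NormedAddCommGroup E] [InnerProductSpace ℝ E] {x : E}

theorem contDiffAt_normSq_rpow (p : ℝ) (hx : x ≠ 0) {k : WithTop ℕ∞} :
    ContDiffAt ℝ k (fun y : E => (‖y‖ ^ 2) ^ p) x :=
  (contDiff_norm_sq ℝ).contDiffAt.rpow_const_of_ne (by positivity)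

theorem hasFDerivAt_normSq_rpow (p : ℝ) (hx : x ≠ 0) :
    HasFDerivAt (fun y : E => (‖y‖ ^ 2) ^ p) ((2 * p * (‖x‖ ^ 2) ^ (p - 1)) • innerSL ℝ x) x := by
  refine ((hasStrictFDerivAt_norm_sq x).hasFDerivAt.rpow_const (p := p)
    (Or.inl (by positivity))).congr_fderiv ?_
  ext v
  simp only [smul_apply, coe_innerSL_apply, nsmul_eq_mul, Nat.cast_ofNat, smul_eq_mul]
  ring

theorem fderiv_fderiv_normSq_rpow_apply (p : ℝ) (hx : x ≠ 0) (v w : E) :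
    fderiv ℝ (fderiv ℝ fun y : E => (‖y‖ ^ 2) ^ p) x v w =
      2 * p * (‖x‖ ^ 2) ^ (p - 1) * ⟪v, w⟫ +
        4 * p * (p - 1) * (‖x‖ ^ 2) ^ (p - 2) * ⟪x, v⟫ * ⟪x, w⟫ := by
  have hfd : (fun y => fderiv ℝ (fun y : E => (‖y‖ ^ 2) ^ p) y w) =ᶠ[𝓝 x]
      fun y => 2 * p * (‖y‖ ^ 2) ^ (p - 1) * ⟪y, w⟫ := by
    filter_upwards [isOpen_ne.mem_nhds hx] with y hy
    simp [(hasFDerivAt_normSq_rpow p hy).fderiv]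
  have hinner : HasFDerivAt (fun y : E => ⟪y, w⟫) ((innerSL ℝ).flip w) x :=
    ((innerSL ℝ).flip w).hasFDerivAt
  rw [← fderiv_fderiv_apply_eq ((contDiffAt_normSq_rpow p hx).differentiableAt_fderiv),
    hfd.fderiv_eq, (((hasFDerivAt_normSq_rpow (p - 1) hx).const_mul (2 * p)).fun_mul hinner).fderiv]
  simp only [add_apply, smul_apply, smul_eq_mul, ContinuousLinearMap.flip_apply,
    innerSL_apply_apply, real_inner_comm w v, sub_sub, one_add_one_eq_two]
  ring

variable {ι : Type*} [Fintype ι] (b : OrthonormalBasis ι ℝ E)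

theorem sum_fderiv_fderiv_normSq_rpow (p : ℝ) (hx : x ≠ 0) :
    ∑ i, fderiv ℝ (fderiv ℝ fun y : E => (‖y‖ ^ 2) ^ p) x (b i) (b i) =
      2 * p * (Fintype.card ι + 2 * (p - 1)) * (‖x‖ ^ 2) ^ (p - 1) := by
  have hN : ‖x‖ ^ 2 ≠ 0 := by positivity
  simp_rw [fderiv_fderiv_normSq_rpow_apply p hx, Finset.sum_add_distrib, ← Finset.mul_sum,
    mul_assoc _ ⟪x, _⟫, ← sq, ← Finset.mul_sum, b.sum_inner_self, b.sum_sq_inner_left,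
    show p - 2 = p - 1 - 1 by ring, Real.rpow_sub_one hN]
  field_simp
  ring

theorem sum_fderiv_fderiv_normSq_rpow_eq_zero (hx : x ≠ 0) :
    ∑ i, fderiv ℝ (fderiv ℝ fun y : E => (‖y‖ ^ 2) ^ ((2 - Fintype.card ι : ℝ) / 2)) x
      (b i) (b i) = 0 := by
  rw [sum_fderiv_fderiv_normSq_rpow b _ hx]
  ring

end NormSqRpow

section Inversion

variable {E : Type*} [NormedAddCommGroup E] [InnerProductSpace ℝ E] {x : E}

theorem inversion_zero_one_apply (y : E) : inversion (0 : E) 1 y = (‖y‖ ^ 2)⁻¹ • y := by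
  simp [inversion]

theorem inversion_zero_one_eq_rpow :
    inversion (0 : E) 1 = fun y => (‖y‖ ^ 2) ^ (-1 : ℝ) • y := by
  ext1 y
  rw [inversion_zero_one_apply, Real.rpow_neg_one]

theorem contDiffAt_inversion_zero_one (hx : x ≠ 0) {k : WithTop ℕ∞} :
    ContDiffAt ℝ k (inversion (0 : E) 1) x :=
  inversion_zero_one_eq_rpow (E := E) ▸ (contDiffAt_normSq_rpow _ hx).smul contDiffAt_fun_id

theorem fderiv_inversion_zero_one_apply (hx : x ≠ 0) (v : E) :
    fderiv ℝ (inversion (0 : E) 1) x v = (‖x‖ ^ 2)⁻¹ • (v - (2 / ‖x‖ ^ 2 * ⟪x, v⟫) • x) := by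
  rw [inversion_zero_one_eq_rpow, fderiv_fun_smul
    (hasFDerivAt_normSq_rpow _ hx).differentiableAt differentiableAt_fun_id,
    (hasFDerivAt_normSq_rpow _ hx).fderiv]
  simp only [add_apply, smul_apply, fderiv_fun_id, ContinuousLinearMap.id_apply,
    ContinuousLinearMap.smulRight_apply, innerSL_apply_apply, smul_eq_mul, Real.rpow_neg_one]
  rw [show (-1 : ℝ) - 1 = -(2 : ℕ) by norm_num, Real.rpow_neg (by positivity), Real.rpow_natCast]
  module

variable {ι : Type*} [Fintype ι] (b : OrthonormalBasis ι ℝ E)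

theorem sum_fderiv_fderiv_inversion_zero_one (hx : x ≠ 0) :
    ∑ i, fderiv ℝ (fderiv ℝ (inversion (0 : E) 1)) x (b i) (b i) =
      ((4 - 2 * Fintype.card ι) / (‖x‖ ^ 2) ^ 2) • x := by
  have hid : fderiv ℝ (fderiv ℝ fun y : E => y) x = 0 := by
    simp [funext fun y : E => fderiv_fun_id (𝕜 := ℝ) (x := y)]
  simp_rw [inversion_zero_one_eq_rpow,
    fderiv_fderiv_smul_apply (contDiffAt_normSq_rpow (-1) hx) contDiffAt_fun_id]
  simp only [hid, fderiv_fun_id, zero_apply, smul_zero, zero_add,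
    (hasFDerivAt_normSq_rpow _ hx).fderiv, smul_apply, innerSL_apply_apply,
    ContinuousLinearMap.id_apply, smul_eq_mul, Finset.sum_add_distrib, ← Finset.sum_smul,
    sum_fderiv_fderiv_normSq_rpow b _ hx, b.sum_mul_inner_smul]
  rw [show (-1 : ℝ) - 1 = -(2 : ℕ) by norm_num, Real.rpow_neg (by positivity), Real.rpow_natCast]
  module

end Inversion

section Kelvin

variable {E : Type*} [NormedAddCommGroup E] [InnerProductSpace ℝ E]
  {ι : Type*} [Fintype ι] (b : OrthonormalBasis ι ℝ E) {f : E → ℝ} {x : E}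

theorem fderiv_comp_inversion_zero_one_apply_self (hx : x ≠ 0)
    (hf : DifferentiableAt ℝ f (inversion 0 1 x)) :
    fderiv ℝ (f ∘ inversion 0 1) x x = -(‖x‖ ^ 2)⁻¹ * fderiv ℝ f (inversion 0 1 x) x := by
  have hN : ‖x‖ ^ 2 ≠ 0 := by positivity
  rw [fderiv_comp x hf ((contDiffAt_inversion_zero_one hx (k := 1)).differentiableAt one_ne_zero),
    ContinuousLinearMap.comp_apply, fderiv_inversion_zero_one_apply hx,
    real_inner_self_eq_norm_sq, div_mul_cancel₀ 2 hN]
  simp only [map_smul, map_sub, smul_eq_mul]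
  ring

theorem sum_fderiv_fderiv_comp_inversion_zero_one (hx : x ≠ 0)
    (hf : ContDiffAt ℝ 2 f (inversion 0 1 x)) :
    ∑ i, fderiv ℝ (fderiv ℝ (f ∘ inversion 0 1)) x (b i) (b i) =
      ((‖x‖ ^ 2) ^ 2)⁻¹ * (∑ i, fderiv ℝ (fderiv ℝ f) (inversion 0 1 x) (b i) (b i) +
        (4 - 2 * Fintype.card ι) * fderiv ℝ f (inversion 0 1 x) x) := by
  simp_rw [fderiv_fderiv_comp_apply hf (contDiffAt_inversion_zero_one hx),
    fderiv_inversion_zero_one_apply hx, Finset.sum_add_distrib, b.sum_apply_smul_reflection,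
    ← map_sum, sum_fderiv_fderiv_inversion_zero_one b hx, map_smul, smul_eq_mul]
  ring

noncomputable def kelvinTransform (f : E → ℝ) (x : E) : ℝ :=
  ‖x‖ ^ (2 - Module.finrank ℝ E : ℝ) * f (inversion 0 1 x)

theorem kelvinTransform_eq_normSq_rpow_smul (f : E → ℝ) :
    kelvinTransform f =
      fun y => (‖y‖ ^ 2) ^ ((2 - Module.finrank ℝ E : ℝ) / 2) • (f ∘ inversion 0 1) y := by
  ext y
  rw [kelvinTransform, ← Real.rpow_natCast, ← Real.rpow_mul (norm_nonneg y), smul_eq_mul,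
    Function.comp_apply]
  ring_nf

theorem contDiffAt_kelvinTransform (hx : x ≠ 0) (hf : ContDiffAt ℝ 2 f (inversion 0 1 x)) :
    ContDiffAt ℝ 2 (kelvinTransform f) x := by
  rw [kelvinTransform_eq_normSq_rpow_smul]
  exact (contDiffAt_normSq_rpow _ hx).smul (hf.comp x (contDiffAt_inversion_zero_one hx))

theorem sum_fderiv_fderiv_kelvinTransform (hx : x ≠ 0)
    (hf : ContDiffAt ℝ 2 f (inversion 0 1 x)) :
    ∑ i, fderiv ℝ (fderiv ℝ (kelvinTransform f)) x (b i) (b i) =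
      (‖x‖ ^ 2) ^ (-(Module.finrank ℝ E + 2 : ℝ) / 2) *
        ∑ i, fderiv ℝ (fderiv ℝ f) (inversion 0 1 x) (b i) (b i) := by
  have hN : 0 < ‖x‖ ^ 2 := by positivity
  have hd : (Module.finrank ℝ E : ℝ) = Fintype.card ι := by
    rw [Module.finrank_eq_card_basis b.toBasis]
  rw [kelvinTransform_eq_normSq_rpow_smul]
  set p : ℝ := (2 - Module.finrank ℝ E) / 2
  have hgrad : ∑ i, fderiv ℝ (fun y : E => (‖y‖ ^ 2) ^ p) x (b i) *
      fderiv ℝ (f ∘ inversion 0 1) x (b i) =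
      -(2 * p * (‖x‖ ^ 2) ^ (p - 1) * (‖x‖ ^ 2)⁻¹) * fderiv ℝ f (inversion 0 1 x) x := by
    simp_rw [(hasFDerivAt_normSq_rpow p hx).fderiv, smul_apply, innerSL_apply_apply, smul_eq_mul,
      ← smul_eq_mul (a := _ * ⟪x, _⟫), ← map_smul, ← map_sum, b.sum_mul_inner_smul, map_smul,
      fderiv_comp_inversion_zero_one_apply_self hx (hf.differentiableAt two_ne_zero), smul_eq_mul]
    ring
  have hweight : ∑ i, fderiv ℝ (fderiv ℝ fun y : E => (‖y‖ ^ 2) ^ p) x (b i) (b i) = 0 := by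
    simp only [p, hd, sum_fderiv_fderiv_normSq_rpow_eq_zero b hx]
  simp_rw [fderiv_fderiv_smul_apply (contDiffAt_normSq_rpow p hx)
    (hf.comp x (contDiffAt_inversion_zero_one hx)), Finset.sum_add_distrib, ← Finset.sum_smul,
    ← Finset.smul_sum, smul_eq_mul, hweight, sum_fderiv_fderiv_comp_inversion_zero_one b hx hf]
  rw [hgrad, ← hd, show -(Module.finrank ℝ E + 2 : ℝ) / 2 = p - 2 by ring,
    Real.rpow_sub hN p 2, Real.rpow_two, Real.rpow_sub_one hN.ne' p]
  field_simp
  ring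

end Kelvin

/-- If `f` is twice continuously differentiable and harmonic
(`Δ f = 0`) on `ℝⁿ \ {0}`, then its Kelvin transform
`Kf(x) = ‖x‖^(2-n) f(x/‖x‖²)` is harmonic on `ℝⁿ \ {0}`. -/
theorem kelvin_transform_harmonic (n : ℕ)
    (lap : (EuclideanSpace ℝ (Fin n) → ℝ) → EuclideanSpace ℝ (Fin n) → ℝ)
    (hlap : ∀ g x, lap g x =
      ∑ i : Fin n,
        fderiv ℝ (fun y => fderiv ℝ g y (EuclideanSpace.single i (1 : ℝ))) x
          (EuclideanSpace.single i (1 : ℝ)))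
    (f : EuclideanSpace ℝ (Fin n) → ℝ)
    (hf : ContDiffOn ℝ 2 f {x | x ≠ 0})
    (hharm : ∀ x : EuclideanSpace ℝ (Fin n), x ≠ 0 → lap f x = 0)
    (K : EuclideanSpace ℝ (Fin n) → ℝ)
    (hK : ∀ x, K x = ‖x‖ ^ ((2 : ℝ) - n) * f ((‖x‖ ^ 2)⁻¹ • x)) :
    ∀ x : EuclideanSpace ℝ (Fin n), x ≠ 0 → lap K x = 0 := by
  intro x hx
  have hlap_eq : ∀ g y, ContDiffAt ℝ 2 g y →
      lap g y = ∑ i, fderiv ℝ (fderiv ℝ g) y (EuclideanSpace.basisFun (Fin n) ℝ i)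
        (EuclideanSpace.basisFun (Fin n) ℝ i) := fun g y hg => by
    simp [hlap, fderiv_fderiv_apply_eq hg.differentiableAt_fderiv]
  have hKf : K = kelvinTransform f := by
    ext y
    rw [hK, kelvinTransform, finrank_euclideanSpace_fin, inversion_zero_one_apply]
  have hσx : inversion 0 1 x ≠ 0 := (inversion_eq_center one_ne_zero).not.mpr hx
  have hfσ : ContDiffAt ℝ 2 f (inversion 0 1 x) := hf.contDiffAt (isOpen_ne.mem_nhds hσx)
  rw [hKf, hlap_eq _ _ (contDiffAt_kelvinTransform hx hfσ),
    sum_fderiv_fderiv_kelvinTransform _ hx hfσ, ← hlap_eq _ _ hfσ, hharm _ hσx, mul_zero]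
end

section
/- Let p_t(x,y) = t^{-nα/2} φ(x/t^{α/2}, y/t^{α/2}) θ(y/t^{α/2}) exp(−(ρ(x)+ρ(y))/(2t)) with φ(λx,y)=φ(x,λy), ρ(λx)=λ^{2/α}ρ(x), θ(λy)=λ^β θ(y) for λ > 0. Let I(x) = x ρ(x)^{-α}. Then the transition density of the involuted process, p^I_t(x,y) := p_t(I(x), I(y)) · Jac(I)(y), satisfies ∫₀^∞ p^I_t(x,y) dt = V(y) (h(y)/h(x)) ∫₀^∞ p_t(x,y) dt, where h(x) = ρ(x)^{1−(β+n)α/2} and V(y) = Jac(I)(y) ρ(y)^{nα−2}, whenever the integrals converge. -/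
/-!
Since `ρ (I x) = ρ(x)⁻¹` and, by the homogeneity of `φ`, only the product of the two space
scalings matters, `p_t(I x, I y)` is a constant multiple of `p_{ρ(x)ρ(y)t}(x, y)`. The
substitution `s = ρ(x)ρ(y)t` in the time integral then yields the identity, the constants
combining into `V(y) h(y) / h(x)`.
-/

open MeasureTheory Set Real

section SelfSimilarDensity

variable {E : Type*} [AddCommGroup E] [Module ℝ E]

noncomputable def selfSimilarDensity (d α : ℝ) (φ : E → E → ℝ) (ρ θ : E → ℝ) (t : ℝ) (x y : E) :
    ℝ :=
  t ^ (-(d * α) / 2) * φ ((t ^ (-(α / 2)) : ℝ) • x) ((t ^ (-(α / 2)) : ℝ) • y) *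
    θ ((t ^ (-(α / 2)) : ℝ) • y) * exp (-(ρ x + ρ y) / (2 * t))

variable {α β : ℝ} {φ : E → E → ℝ} {ρ θ : E → ℝ}

theorem apply_rpow_neg_smul_self (hα : α ≠ 0)
    (hρ : ∀ c : ℝ, 0 < c → ∀ x, ρ (c • x) = c ^ (2 / α) * ρ x) {z : E} (hz : 0 < ρ z) :
    ρ (ρ z ^ (-α) • z) = (ρ z)⁻¹ := by
  rw [hρ _ (rpow_pos_of_pos hz _), ← rpow_mul hz.le, ← rpow_add_one hz.ne',
    show -α * (2 / α) + 1 = -1 by field_simp; ring, rpow_neg_one]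

theorem selfSimilarDensity_rpow_neg_smul (d : ℝ) (hα : α ≠ 0)
    (hφ : ∀ c : ℝ, 0 < c → ∀ x y, φ (c • x) y = φ x (c • y))
    (hρ : ∀ c : ℝ, 0 < c → ∀ x, ρ (c • x) = c ^ (2 / α) * ρ x)
    (hθ : ∀ c : ℝ, 0 < c → ∀ x, θ (c • x) = c ^ β * θ x)
    {x y : E} (hx : 0 < ρ x) (hy : 0 < ρ y) {t : ℝ} (ht : 0 < t) :
    selfSimilarDensity d α φ ρ θ t (ρ x ^ (-α) • x) (ρ y ^ (-α) • y) =
      ρ x ^ ((d * α + α * β) / 2) * ρ y ^ ((d * α - α * β) / 2) *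
        selfSimilarDensity d α φ ρ θ (ρ x * ρ y * t) x y := by
  set s := ρ x * ρ y * t
  have hs : 0 < s := by positivity
  have hφ' {a : ℝ} (ha : 0 < a) (b : ℝ) : φ (a • x) (b • y) = φ x ((a * b) • y) := by
    rw [hφ a ha, smul_smul]
  have hscale : t ^ (-(α / 2)) * ρ x ^ (-α) * (t ^ (-(α / 2)) * ρ y ^ (-α))
      = s ^ (-(α / 2)) * s ^ (-(α / 2)) := by
    simp only [rpow_def_of_pos ht, rpow_def_of_pos hx, rpow_def_of_pos hy, rpow_def_of_pos hs,
      s, log_mul (mul_pos hx hy).ne' ht.ne', log_mul hx.ne' hy.ne', ← exp_add]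
    ring_nf
  have hprefactor : t ^ (-(d * α) / 2) * (t ^ (-(α / 2)) * ρ y ^ (-α)) ^ β
      = ρ x ^ ((d * α + α * β) / 2) * ρ y ^ ((d * α - α * β) / 2) *
          (s ^ (-(d * α) / 2) * (s ^ (-(α / 2))) ^ β) := by
    simp only [rpow_def_of_pos ht, rpow_def_of_pos hx, rpow_def_of_pos hy, rpow_def_of_pos hs,
      s, log_mul (mul_pos hx hy).ne' ht.ne', log_mul hx.ne' hy.ne', ← exp_add, ← exp_mul]
    ring_nf
  have hexponent : -((ρ x)⁻¹ + (ρ y)⁻¹) / (2 * t) = -(ρ x + ρ y) / (2 * s) := by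
    field_simp
    ring
  simp only [selfSimilarDensity, apply_rpow_neg_smul_self hα hρ hx,
    apply_rpow_neg_smul_self hα hρ hy, smul_smul,
    hφ' (by positivity : 0 < t ^ (-(α / 2)) * ρ x ^ (-α)), hφ' (rpow_pos_of_pos hs _),
    hθ _ (by positivity : 0 < t ^ (-(α / 2)) * ρ y ^ (-α)), hθ _ (rpow_pos_of_pos hs _),
    hscale, hexponent]
  linear_combination φ x ((s ^ (-(α / 2)) * s ^ (-(α / 2))) • y) * θ y *
    exp (-(ρ x + ρ y) / (2 * s)) * hprefactor

end SelfSimilarDensity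

theorem setLIntegral_Ioi_zero_comp_mul_left {c : ℝ} (hc : 0 < c) (g : ℝ → ENNReal) :
    ∫⁻ t in Ioi 0, g (c * t) = ENNReal.ofReal c⁻¹ * ∫⁻ s in Ioi 0, g s := by
  have hderiv (t : ℝ) : HasDerivWithinAt (c * ·) c (Ioi 0) t := by
    simpa using ((hasDerivAt_id t).const_mul c).hasDerivWithinAt
  have hsubst := lintegral_image_eq_lintegral_abs_deriv_mul measurableSet_Ioi
    (fun t _ => hderiv t) (mul_right_injective₀ hc.ne').injOn g
  rw [image_const_mul_Ioi_zero hc, abs_of_pos hc,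
    lintegral_const_mul' _ _ ENNReal.ofReal_ne_top] at hsubst
  rw [hsubst, ← mul_assoc, ← ENNReal.ofReal_mul (inv_nonneg.2 hc.le), inv_mul_cancel₀ hc.ne',
    ENNReal.ofReal_one, one_mul]

theorem inverted_process_potential_general (n : ℕ) (α β : ℝ) (hα : 0 < α)
    (φ : EuclideanSpace ℝ (Fin n) → EuclideanSpace ℝ (Fin n) → ℝ)
    (ρ θ : EuclideanSpace ℝ (Fin n) → ℝ)
    (hφhom : ∀ c : ℝ, 0 < c → ∀ x y, φ (c • x) y = φ x (c • y))
    (hρhom : ∀ c : ℝ, 0 < c → ∀ x, ρ (c • x) = c ^ ((2 : ℝ) / α) * ρ x)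
    (hθhom : ∀ c : ℝ, 0 < c → ∀ x, θ (c • x) = c ^ β * θ x)
    (p : ℝ → EuclideanSpace ℝ (Fin n) → EuclideanSpace ℝ (Fin n) → ℝ)
    (hp : ∀ t : ℝ, 0 < t → ∀ x y,
      p t x y = t ^ (-((n : ℝ) * α) / 2) *
        φ ((t ^ (-(α / 2)) : ℝ) • x) ((t ^ (-(α / 2)) : ℝ) • y) *
        θ ((t ^ (-(α / 2)) : ℝ) • y) * Real.exp (-(ρ x + ρ y) / (2 * t)))
    (I : EuclideanSpace ℝ (Fin n) → EuclideanSpace ℝ (Fin n))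
    (hI : ∀ x, I x = (ρ x ^ (-α)) • x)
    (J : EuclideanSpace ℝ (Fin n) → ℝ)
    (hJ : ∀ y, J y = |LinearMap.det (fderiv ℝ I y).toLinearMap|)
    (h : EuclideanSpace ℝ (Fin n) → ℝ)
    (hh : ∀ x, h x = ρ x ^ (1 - (β + n) * α / 2))
    (V : EuclideanSpace ℝ (Fin n) → ℝ)
    (hV : ∀ y, V y = J y * ρ y ^ ((n : ℝ) * α - 2))
    (x y : EuclideanSpace ℝ (Fin n)) (hx : 0 < ρ x) (hy : 0 < ρ y) :
    ∫⁻ t in Set.Ioi (0 : ℝ), ENNReal.ofReal (p t (I x) (I y) * J y) ∂volume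
      = ENNReal.ofReal (V y * (h y / h x)) *
          ∫⁻ t in Set.Ioi (0 : ℝ), ENNReal.ofReal (p t x y) ∂volume := by
  have hc : 0 < ρ x * ρ y := mul_pos hx hy
  have hJ0 : 0 ≤ J y := hJ y ▸ abs_nonneg _
  set K := ρ x ^ (((n : ℝ) * α + α * β) / 2) * ρ y ^ (((n : ℝ) * α - α * β) / 2) with hK
  have hp' : ∀ t : ℝ, 0 < t → ∀ x y, p t x y = selfSimilarDensity n α φ ρ θ t x y := hp
  have hpoint (t : ℝ) (ht : t ∈ Ioi 0) : ENNReal.ofReal (p t (I x) (I y) * J y)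
      = ENNReal.ofReal (J y * K) * ENNReal.ofReal (p (ρ x * ρ y * t) x y) := by
    rw [hp' t ht, hp' _ (mul_pos hc ht), hI, hI,
      selfSimilarDensity_rpow_neg_smul n hα.ne' hφhom hρhom hθhom hx hy ht,
      ← ENNReal.ofReal_mul (by positivity), hK]
    ring_nf
  have hconst : J y * K * (ρ x * ρ y)⁻¹ = V y * (h y / h x) := by
    rw [hV, hh, hh, div_eq_mul_inv, ← rpow_neg hx.le, mul_inv, ← rpow_neg_one (ρ x),
      ← rpow_neg_one (ρ y)]
    simp only [hK, rpow_def_of_pos hx, rpow_def_of_pos hy, mul_assoc, ← exp_add]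
    ring_nf
  calc ∫⁻ t in Ioi 0, ENNReal.ofReal (p t (I x) (I y) * J y)
      = ∫⁻ t in Ioi 0, ENNReal.ofReal (J y * K) * ENNReal.ofReal (p (ρ x * ρ y * t) x y) :=
        setLIntegral_congr_fun measurableSet_Ioi hpoint
    _ = ENNReal.ofReal (J y * K) *
          (ENNReal.ofReal (ρ x * ρ y)⁻¹ * ∫⁻ s in Ioi 0, ENNReal.ofReal (p s x y)) := by
        rw [lintegral_const_mul' _ _ ENNReal.ofReal_ne_top,
          setLIntegral_Ioi_zero_comp_mul_left hc (fun s => ENNReal.ofReal (p s x y))]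
    _ = ENNReal.ofReal (V y * (h y / h x)) * ∫⁻ t in Ioi 0, ENNReal.ofReal (p t x y) := by
        rw [← mul_assoc, ← ENNReal.ofReal_mul (by positivity), hconst]

/-- For a semigroup with densities of the form
`p_t(x,y) = t^(-nα/2) φ(x/t^(α/2), y/t^(α/2)) θ(y/t^(α/2)) exp(-(ρ(x)+ρ(y))/(2t))`
with the stated homogeneity properties, let `I(x) = ρ(x)^(-α) • x` and let
`p^I_t(x,y) = p_t(I x, I y) · Jac(I)(y)`, where `Jac(I)(y)` is the modulus of the
Jacobian determinant of `I` at `y`. Then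
`∫₀^∞ p^I_t(x,y) dt = V(y) (h(y)/h(x)) ∫₀^∞ p_t(x,y) dt`, where
`h(x) = ρ(x)^(1-(β+n)α/2)` and `V(y) = Jac(I)(y) ρ(y)^(nα-2)`, whenever the
integrals converge. -/
theorem inverted_process_potential (n : ℕ) (α β : ℝ) (hα : 0 < α)
    (S : Set (EuclideanSpace ℝ (Fin n)))
    (hS : ∀ c : ℝ, 0 ≤ c → ∀ x ∈ S, c • x ∈ S)
    (φ : EuclideanSpace ℝ (Fin n) → EuclideanSpace ℝ (Fin n) → ℝ)
    (ρ θ : EuclideanSpace ℝ (Fin n) → ℝ)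
    (hφpos : ∀ x y, 0 ≤ φ x y) (hθpos : ∀ x, 0 ≤ θ x)
    (hφhom : ∀ c : ℝ, 0 < c → ∀ x y, φ (c • x) y = φ x (c • y))
    (hρhom : ∀ c : ℝ, 0 < c → ∀ x, ρ (c • x) = c ^ ((2 : ℝ) / α) * ρ x)
    (hθhom : ∀ c : ℝ, 0 < c → ∀ x, θ (c • x) = c ^ β * θ x)
    (p : ℝ → EuclideanSpace ℝ (Fin n) → EuclideanSpace ℝ (Fin n) → ℝ)
    (hp : ∀ t : ℝ, 0 < t → ∀ x y,
      p t x y = t ^ (-((n : ℝ) * α) / 2) *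
        φ ((t ^ (-(α / 2)) : ℝ) • x) ((t ^ (-(α / 2)) : ℝ) • y) *
        θ ((t ^ (-(α / 2)) : ℝ) • y) * Real.exp (-(ρ x + ρ y) / (2 * t)))
    (I : EuclideanSpace ℝ (Fin n) → EuclideanSpace ℝ (Fin n))
    (hI : ∀ x, I x = (ρ x ^ (-α)) • x)
    (J : EuclideanSpace ℝ (Fin n) → ℝ)
    (hJ : ∀ y, J y = |LinearMap.det (fderiv ℝ I y).toLinearMap|)
    (h : EuclideanSpace ℝ (Fin n) → ℝ)
    (hh : ∀ x, h x = ρ x ^ (1 - (β + n) * α / 2))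
    (V : EuclideanSpace ℝ (Fin n) → ℝ)
    (hV : ∀ y, V y = J y * ρ y ^ ((n : ℝ) * α - 2))
    (x y : EuclideanSpace ℝ (Fin n)) (hx : 0 < ρ x) (hy : 0 < ρ y)
    (hconv : ∫⁻ t in Set.Ioi (0 : ℝ), ENNReal.ofReal (p t x y) ∂volume < ⊤) :
    ∫⁻ t in Set.Ioi (0 : ℝ), ENNReal.ofReal (p t (I x) (I y) * J y) ∂volume
      = ENNReal.ofReal (V y * (h y / h x)) *
          ∫⁻ t in Set.Ioi (0 : ℝ), ENNReal.ofReal (p t x y) ∂volume :=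
  inverted_process_potential_general n α β hα φ ρ θ hφhom hρhom hθhom p hp I hI J hJ h hh V hV x y
    hx hy
end

section
/- For the transition density p_t(x,y) of n independent scaled powered Bessel processes with indices ν_i > −1, scales σ_i > 0, and power α ≠ 0, with mean index ν̄ = (ν₁+⋯+ν_n)/n: if 2n(ν̄+1) > 2, then the potential ∫₀^∞ p_t(x,y) dt is finite for x ≠ y in the open cone, using the asymptotics I_ν(z) ~ z^ν/(2^ν Γ(1+ν)) as z→0 and I_ν(z) ~ e^z/√(2πz) as z→∞ of the modified Bessel function of the first kind. -/
/-!
Write each factor of the density as `A / t * I (k / t) * exp (-d / t)` with `k > 0` and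
`d - k = (x^{1/α} - y^{1/α})² / (2σ²) ≥ 0`. For large `t` the Bessel function is evaluated near
`0`, where `I(z) = O(z^ν)`, so the factor is `O(t^{-(1+ν)})` and the product is
`O(t^{-∑(1+ν_i)})`, integrable at infinity because `∑ (1 + ν_i) = n(ν̄ + 1) > 1`. For all `t`,
continuity and the two asymptotics give `|I(z)| ≤ C (z^ν + e^z)`; the growth `e^{k/t}` is then
absorbed by `e^{-d/t}`, leaving a polynomial in `1/t` times `e^{-c/t}` with
`c = ∑ (d_i - k_i) > 0` since `x ≠ y`, which is bounded on `(0, ∞)`.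
-/

open Filter Set Asymptotics Topology MeasureTheory
open scoped Real

theorem isBigO_rpow_nhdsGT_zero_of_tendsto_div {f : ℝ → ℝ} {ν c : ℝ}
    (h : Tendsto (fun z => f z / (z ^ ν / c)) (𝓝[>] 0) (𝓝 1)) : f =O[𝓝[>] 0] (· ^ ν) :=
  (isEquivalent_of_tendsto_one h).isBigO.trans <|
    (isBigO_const_mul_self c⁻¹ (· ^ ν) _).congr_left fun _ => (div_eq_inv_mul _ _).symm

theorem isBigO_exp_atTop_of_tendsto_div {f : ℝ → ℝ}
    (h : Tendsto (fun z => f z / (Real.exp z / √(2 * π * z))) atTop (𝓝 1)) :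
    f =O[atTop] Real.exp := by
  refine (isEquivalent_of_tendsto_one h).isBigO.trans (IsBigO.of_bound 1 ?_)
  filter_upwards [eventually_ge_atTop 1] with z hz
  rw [one_mul, Real.norm_of_nonneg (by positivity), Real.norm_of_nonneg (by positivity)]
  exact div_le_self (Real.exp_pos z).le (Real.one_le_sqrt.2 (by nlinarith [Real.pi_gt_three]))

theorem exists_forall_abs_le_of_isBigO {f g : ℝ → ℝ} (hf : ContinuousOn f (Ioi 0))
    (hg : ∀ z > 0, 1 ≤ g z) (h0 : f =O[𝓝[>] 0] g) (hinf : f =O[atTop] g) :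
    ∃ C ≥ 0, ∀ z > 0, |f z| ≤ C * g z := by
  obtain ⟨C₀, hC₀, a, ha, h₀⟩ := h0.exists_mem_basis (nhdsGT_basis 0)
  obtain ⟨C₁, hC₁, b, -, h₁⟩ := hinf.exists_mem_basis atTop_basis
  obtain ⟨M, hM⟩ := isCompact_Icc.exists_bound_of_continuousOn
    (hf.mono fun z (hz : z ∈ Icc a b) => ha.trans_le hz.1)
  refine ⟨C₀ + C₁ + |M|, by positivity, fun z hz => ?_⟩
  have hgz : 0 ≤ g z := zero_le_one.trans (hg z hz)
  suffices ∃ C', C' ≤ C₀ + C₁ + |M| ∧ |f z| ≤ C' * g z by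
    obtain ⟨C', hC', hfz⟩ := this
    exact hfz.trans (mul_le_mul_of_nonneg_right hC' hgz)
  rcases lt_or_ge z a with hza | hza
  · refine ⟨C₀, by linarith [abs_nonneg M], ?_⟩
    simpa [abs_of_nonneg hgz] using h₀ z ⟨hz, hza⟩
  rcases le_or_gt z b with hzb | hzb
  · refine ⟨|M|, by linarith, ?_⟩
    calc |f z| ≤ |M| := (hM z ⟨hza, hzb⟩).trans (le_abs_self M)
      _ ≤ |M| * g z := le_mul_of_one_le_right (abs_nonneg M) (hg z hz)
  · refine ⟨C₁, by linarith [abs_nonneg M], ?_⟩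
    simpa [abs_of_nonneg hgz] using h₁ z hzb.le

theorem exists_forall_abs_le_rpow_add_exp {f : ℝ → ℝ} {ν : ℝ} (hf : ContinuousOn f (Ioi 0))
    (h0 : f =O[𝓝[>] 0] (· ^ ν)) (hinf : f =O[atTop] Real.exp) :
    ∃ C ≥ 0, ∀ z > 0, |f z| ≤ C * (z ^ ν + Real.exp z) := by
  refine exists_forall_abs_le_of_isBigO hf
    (fun z hz => le_add_of_nonneg_of_le (by positivity) (Real.one_le_exp hz.le)) ?_ ?_
  · refine h0.trans (IsBigO.of_bound 1 ?_)
    filter_upwards [self_mem_nhdsWithin] with z (hz : 0 < z)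
    rw [one_mul, Real.norm_of_nonneg (by positivity), Real.norm_of_nonneg (by positivity)]
    linarith [Real.exp_pos z]
  · refine hinf.trans (IsBigO.of_bound 1 ?_)
    filter_upwards [eventually_gt_atTop 0] with z hz
    rw [one_mul, Real.norm_of_nonneg (by positivity), Real.norm_of_nonneg (by positivity)]
    linarith [Real.rpow_nonneg hz.le ν]

section Kernel

variable {f : ℝ → ℝ} {A k d ν : ℝ}

theorem eventually_abs_kernel_le_rpow (hk : 0 < k) (hd : 0 ≤ d) (hf : f =O[𝓝[>] 0] (· ^ ν)) :
    ∃ E, ∀ᶠ t in atTop, |A / t * f (k / t) * Real.exp (-d / t)| ≤ E * t ^ (-(1 + ν)) := by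
  obtain ⟨C, hC⟩ := hf.bound
  have hkt : Tendsto (fun t => k / t) atTop (𝓝[>] 0) :=
    tendsto_nhdsWithin_iff.2 ⟨tendsto_const_nhds.div_atTop tendsto_id,
      (eventually_gt_atTop 0).mono fun t ht => div_pos hk ht⟩
  refine ⟨|A| * C * k ^ ν, ?_⟩
  filter_upwards [hkt.eventually hC, eventually_gt_atTop 0] with t hfk ht
  rw [Real.norm_eq_abs, Real.norm_eq_abs, abs_of_pos (a := (k / t) ^ ν) (by positivity)] at hfk
  have hexp : Real.exp (-d / t) ≤ 1 :=
    Real.exp_le_one_iff.2 (div_nonpos_of_nonpos_of_nonneg (neg_nonpos.2 hd) ht.le)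
  calc |A / t * f (k / t) * Real.exp (-d / t)| = |A| / t * |f (k / t)| * Real.exp (-d / t) := by
        rw [abs_mul, abs_mul, abs_div, abs_of_pos ht, Real.abs_exp]
    _ ≤ |A| / t * (C * (k / t) ^ ν) * 1 := by
        gcongr
        exact mul_nonneg (by positivity) ((abs_nonneg _).trans hfk)
    _ = |A| * C * k ^ ν * t ^ (-(1 + ν)) := by
        rw [Real.div_rpow hk.le ht.le, Real.rpow_neg ht.le, Real.rpow_add ht, Real.rpow_one]
        field_simp

theorem abs_kernel_le_one_add_inv_pow_mul_exp (hk : 0 < k) (hν : -1 < ν) {C : ℝ} (hC : 0 ≤ C)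
    (hf : ∀ z > 0, |f z| ≤ C * (z ^ ν + Real.exp z)) {m : ℕ} (hm : 1 + ν ≤ m) (hm1 : 1 ≤ m)
    {t : ℝ} (ht : 0 < t) :
    |A / t * f (k / t) * Real.exp (-d / t)|
      ≤ |A| * C * (k ^ ν + 1) * ((1 + t⁻¹) ^ m * Real.exp (-((d - k) * t⁻¹))) := by
  have hu : 0 < t⁻¹ := inv_pos.2 ht
  have hpow : t⁻¹ ^ (1 + ν) ≤ (1 + t⁻¹) ^ m := by
    rw [← Real.rpow_natCast]
    exact (Real.rpow_le_rpow hu.le (by linarith) (by linarith)).trans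
      (Real.rpow_le_rpow_of_exponent_le (by linarith) hm)
  have hlin : t⁻¹ ≤ (1 + t⁻¹) ^ m :=
    (le_add_of_nonneg_left zero_le_one).trans (le_self_pow₀ (by linarith) (by omega))
  have hexp : Real.exp (-d / t) ≤ Real.exp (-((d - k) * t⁻¹)) := by
    rw [Real.exp_le_exp, div_eq_mul_inv]
    nlinarith [mul_pos hk hu]
  have hsplit : Real.exp (k / t) * Real.exp (-d / t) = Real.exp (-((d - k) * t⁻¹)) := by
    rw [← Real.exp_add]; ring_nf
  calc |A / t * f (k / t) * Real.exp (-d / t)|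
      = |A| * (t⁻¹ * |f (k / t)|) * Real.exp (-d / t) := by
        rw [abs_mul, abs_mul, abs_div, abs_of_pos ht, Real.abs_exp, div_eq_mul_inv]; ring
    _ ≤ |A| * (t⁻¹ * (C * ((k / t) ^ ν + Real.exp (k / t)))) * Real.exp (-d / t) := by
        gcongr
        exact hf _ (div_pos hk ht)
    _ = |A| * C * (k ^ ν * t⁻¹ ^ (1 + ν) * Real.exp (-d / t)
          + t⁻¹ * (Real.exp (k / t) * Real.exp (-d / t))) := by
        rw [div_eq_mul_inv k t, Real.mul_rpow hk.le hu.le, Real.rpow_add hu, Real.rpow_one]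
        ring
    _ ≤ |A| * C * (k ^ ν * (1 + t⁻¹) ^ m * Real.exp (-((d - k) * t⁻¹))
          + (1 + t⁻¹) ^ m * Real.exp (-((d - k) * t⁻¹))) := by
        rw [hsplit]
        gcongr
    _ = |A| * C * (k ^ ν + 1) * ((1 + t⁻¹) ^ m * Real.exp (-((d - k) * t⁻¹))) := by ring

end Kernel

noncomputable def scaledPowerBesselDensity (I : ℝ → ℝ) (α ν σ x y t : ℝ) : ℝ :=
  (1 / α) * y ^ (1 / α - 1) * (x ^ (1 / α) / (σ ^ 2 * t)) * (y / x) ^ ((ν + 1) / α) *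
    I ((x * y) ^ (1 / α) / (σ ^ 2 * t)) *
    Real.exp (-(x ^ (2 / α) + y ^ (2 / α)) / (2 * σ ^ 2 * t))

section ScaledPowerBesselDensity

variable {I : ℝ → ℝ} {α ν σ x y : ℝ}

theorem scaledPowerBesselDensity_eq (t : ℝ) :
    scaledPowerBesselDensity I α ν σ x y t =
      (1 / α * y ^ (1 / α - 1) * (x ^ (1 / α) / σ ^ 2) * (y / x) ^ ((ν + 1) / α)) / t *
        I ((x * y) ^ (1 / α) / σ ^ 2 / t) *
        Real.exp (-((x ^ (2 / α) + y ^ (2 / α)) / (2 * σ ^ 2)) / t) := by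
  simp only [scaledPowerBesselDensity, div_div, neg_div]
  ring

theorem rpow_two_div_add_sub_mul_rpow (hx : 0 ≤ x) (hy : 0 ≤ y) :
    (x ^ (2 / α) + y ^ (2 / α)) / (2 * σ ^ 2) - (x * y) ^ (1 / α) / σ ^ 2 =
      (x ^ (1 / α) - y ^ (1 / α)) ^ 2 / (2 * σ ^ 2) := by
  have h2 : (2 : ℝ) / α = 1 / α * (2 : ℕ) := by push_cast; ring
  rw [h2, Real.rpow_mul hx, Real.rpow_mul hy, Real.mul_rpow hx hy, Real.rpow_natCast,
    Real.rpow_natCast]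
  ring

theorem eventually_abs_scaledPowerBesselDensity_le_rpow (hx : 0 < x) (hy : 0 < y) (hσ : σ ≠ 0)
    (hI : I =O[𝓝[>] 0] (· ^ ν)) :
    ∃ E, ∀ᶠ t in atTop, |scaledPowerBesselDensity I α ν σ x y t| ≤ E * t ^ (-(1 + ν)) := by
  simp_rw [scaledPowerBesselDensity_eq]
  exact eventually_abs_kernel_le_rpow (by positivity) (by positivity) hI

theorem exists_abs_scaledPowerBesselDensity_le (hx : 0 < x) (hy : 0 < y) (hσ : σ ≠ 0)
    (hν : -1 < ν) {C : ℝ} (hC : 0 ≤ C) (hI : ∀ z > 0, |I z| ≤ C * (z ^ ν + Real.exp z)) {m : ℕ}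
    (hm : 1 + ν ≤ m) (hm1 : 1 ≤ m) :
    ∃ D ≥ 0, ∀ t > 0, |scaledPowerBesselDensity I α ν σ x y t| ≤
      D * ((1 + t⁻¹) ^ m *
        Real.exp (-((x ^ (1 / α) - y ^ (1 / α)) ^ 2 / (2 * σ ^ 2) * t⁻¹))) := by
  refine ⟨|1 / α * y ^ (1 / α - 1) * (x ^ (1 / α) / σ ^ 2) * (y / x) ^ ((ν + 1) / α)| * C *
    (((x * y) ^ (1 / α) / σ ^ 2) ^ ν + 1), by positivity, fun t ht => ?_⟩
  rw [scaledPowerBesselDensity_eq, ← rpow_two_div_add_sub_mul_rpow hx.le hy.le]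
  exact abs_kernel_le_one_add_inv_pow_mul_exp (by positivity) hν hC hI hm hm1 ht

end ScaledPowerBesselDensity

theorem one_add_pow_mul_exp_neg_le (N : ℕ) {c u : ℝ} (hc : 0 < c) (hu : 0 ≤ u) :
    (1 + u) ^ N * Real.exp (-(c * u)) ≤ N.factorial * Real.exp c / c ^ N := by
  have h := Real.pow_div_factorial_le_exp _ (mul_nonneg hc.le (by linarith : 0 ≤ 1 + u)) N
  rw [div_le_iff₀ (by positivity), mul_pow] at h
  have he : Real.exp (-(c * u)) = Real.exp (-(c * (1 + u))) * Real.exp c := by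
    rw [← Real.exp_add]; ring_nf
  rw [le_div_iff₀ (by positivity)]
  calc (1 + u) ^ N * Real.exp (-(c * u)) * c ^ N
      = c ^ N * (1 + u) ^ N * Real.exp (-(c * (1 + u))) * Real.exp c := by rw [he]; ring
    _ ≤ Real.exp (c * (1 + u)) * N.factorial * Real.exp (-(c * (1 + u))) * Real.exp c := by
        gcongr
    _ = N.factorial * Real.exp c := by rw [Real.exp_neg]; field_simp

theorem Finset.prod_le_prod_of_abs_le {ι : Type*} {s : Finset ι} {a b : ι → ℝ}
    (h : ∀ i ∈ s, |a i| ≤ b i) : ∏ i ∈ s, a i ≤ ∏ i ∈ s, b i :=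
  (le_abs_self _).trans <| (Finset.abs_prod s a).trans_le <|
    Finset.prod_le_prod (fun _ _ => abs_nonneg _) h

section Products

variable {ι : Type*} [Fintype ι] {a : ι → ℝ → ℝ}

theorem exists_forall_prod_le_of_abs_le_pow_mul_exp {D c : ι → ℝ} {m : ι → ℕ}
    (hD : ∀ i, 0 ≤ D i) (hc : 0 < ∑ i, c i)
    (h : ∀ i, ∀ t > 0, |a i t| ≤ D i * ((1 + t⁻¹) ^ m i * Real.exp (-(c i * t⁻¹)))) :
    ∃ M, ∀ t > 0, ∏ i, a i t ≤ M := by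
  refine ⟨(∏ i, D i) * ((∑ i, m i).factorial * Real.exp (∑ i, c i) / (∑ i, c i) ^ ∑ i, m i),
    fun t ht => ?_⟩
  calc ∏ i, a i t ≤ ∏ i, D i * ((1 + t⁻¹) ^ m i * Real.exp (-(c i * t⁻¹))) :=
        Finset.prod_le_prod_of_abs_le fun i _ => h i t ht
    _ = (∏ i, D i) * ((1 + t⁻¹) ^ (∑ i, m i) * Real.exp (-((∑ i, c i) * t⁻¹))) := by
        rw [Finset.prod_mul_distrib, Finset.prod_mul_distrib, Finset.prod_pow_eq_pow_sum,
          ← Real.exp_sum, Finset.sum_mul, Finset.sum_neg_distrib]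
    _ ≤ _ := mul_le_mul_of_nonneg_left (one_add_pow_mul_exp_neg_le _ hc (inv_nonneg.2 ht.le))
        (Finset.prod_nonneg fun i _ => hD i)

theorem exists_eventually_prod_le_rpow_of_abs_le {E p : ι → ℝ}
    (h : ∀ i, ∀ᶠ t in atTop, |a i t| ≤ E i * t ^ (-p i)) :
    ∃ E', ∀ᶠ t in atTop, ∏ i, a i t ≤ E' * t ^ (-∑ i, p i) := by
  refine ⟨∏ i, E i, ?_⟩
  filter_upwards [eventually_all.2 h, eventually_gt_atTop 0] with t ht ht0
  calc ∏ i, a i t ≤ ∏ i, E i * t ^ (-p i) := Finset.prod_le_prod_of_abs_le fun i _ => ht i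
    _ = (∏ i, E i) * t ^ (-∑ i, p i) := by
        rw [Finset.prod_mul_distrib, ← Real.rpow_sum_of_pos ht0, Finset.sum_neg_distrib]

end Products

theorem sum_sq_rpow_sub_rpow_div_pos {ι : Type*} [Fintype ι] {α : ℝ} (hα : α ≠ 0)
    {σ x y : ι → ℝ} (hσ : ∀ i, σ i ≠ 0) (hx : ∀ i, 0 ≤ x i) (hy : ∀ i, 0 ≤ y i) (hxy : x ≠ y) :
    0 < ∑ i, (x i ^ (1 / α) - y i ^ (1 / α)) ^ 2 / (2 * σ i ^ 2) := by
  obtain ⟨j, hj⟩ := Function.ne_iff.1 hxy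
  refine Finset.sum_pos' (fun i _ => by positivity) ⟨j, Finset.mem_univ j, ?_⟩
  have hne : x j ^ (1 / α) - y j ^ (1 / α) ≠ 0 :=
    sub_ne_zero.2 fun h => hj (Real.rpow_left_injOn (one_div_ne_zero hα) (hx j) (hy j) h)
  have := hσ j
  positivity

theorem one_lt_sum_one_add_of_mean {n : ℕ} {ν : Fin n → ℝ}
    (h : 2 * (n : ℝ) * ((∑ i, ν i) / n + 1) > 2) : 1 < ∑ i, (1 + ν i) := by
  have hn : (n : ℝ) ≠ 0 := by rintro hn; norm_num [hn] at h
  rw [Finset.sum_add_distrib, Finset.sum_const, Finset.card_univ, Fintype.card_fin,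
    nsmul_eq_mul, mul_one]
  field_simp at h
  linarith

theorem setLIntegral_ofReal_Ioi_lt_top {G : ℝ → ℝ} {q : ℝ} (hq : 1 < q)
    (hM : ∃ M, ∀ t > 0, G t ≤ M) (hE : ∃ E, ∀ᶠ t in atTop, G t ≤ E * t ^ (-q)) :
    ∫⁻ t in Ioi 0, ENNReal.ofReal (G t) < ⊤ := by
  obtain ⟨M, hM⟩ := hM
  obtain ⟨E, hE⟩ := hE
  obtain ⟨T, hT⟩ := eventually_atTop.1 (hE.and (eventually_gt_atTop 0))
  have hT0 : 0 < T := (hT T le_rfl).2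
  rw [← Ioc_union_Ioi_eq_Ioi hT0.le, lintegral_union measurableSet_Ioi Ioc_disjoint_Ioi_same]
  refine ENNReal.add_lt_top.2 ⟨?_, ?_⟩
  · calc ∫⁻ t in Ioc 0 T, ENNReal.ofReal (G t)
        ≤ ∫⁻ _ in Ioc 0 T, ENNReal.ofReal M :=
          setLIntegral_mono measurable_const fun t ht => ENNReal.ofReal_le_ofReal (hM t ht.1)
      _ < ⊤ := by simp [ENNReal.mul_lt_top]
  · calc ∫⁻ t in Ioi T, ENNReal.ofReal (G t)
        ≤ ∫⁻ t in Ioi T, ENNReal.ofReal (E * t ^ (-q)) :=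
          setLIntegral_mono (by fun_prop) fun t ht => ENNReal.ofReal_le_ofReal (hT t ht.le).1
      _ < ⊤ := IntegrableOn.setLIntegral_lt_top
          ((integrableOn_Ioi_rpow_of_lt (by linarith : -q < -1) hT0).const_mul E)

theorem free_scaled_power_bessel_transient_general (n : ℕ)
    (α : ℝ) (hα : α ≠ 0)
    (ν σ : Fin n → ℝ) (hν : ∀ i, -1 < ν i) (hσ : ∀ i, 0 < σ i)
    (Iν : ℝ → ℝ → ℝ)
    (hcont : ∀ i, ContinuousOn (Iν (ν i)) (Set.Ioi 0))
    (hasym0 : ∀ i, Filter.Tendsto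
      (fun z : ℝ => Iν (ν i) z / (z ^ ν i / ((2 : ℝ) ^ ν i * Real.Gamma (1 + ν i))))
      (nhdsWithin 0 (Set.Ioi 0)) (nhds 1))
    (hasymInf : ∀ i, Filter.Tendsto
      (fun z : ℝ => Iν (ν i) z / (Real.exp z / Real.sqrt (2 * π * z)))
      Filter.atTop (nhds 1))
    (x y : Fin n → ℝ) (hx : ∀ i, 0 < x i) (hy : ∀ i, 0 < y i) (hxy : x ≠ y)
    (hrec : 2 * (n : ℝ) * ((∑ i, ν i) / n + 1) > 2) :
    ∫⁻ t in Set.Ioi (0 : ℝ),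
        ENNReal.ofReal (∏ i : Fin n,
          (1 / α) * y i ^ (1 / α - 1) * (x i ^ (1 / α) / (σ i ^ 2 * t)) *
            (y i / x i) ^ ((ν i + 1) / α) *
            Iν (ν i) ((x i * y i) ^ (1 / α) / (σ i ^ 2 * t)) *
            Real.exp (-(x i ^ (2 / α) + y i ^ (2 / α)) / (2 * σ i ^ 2 * t)))
        ∂volume < ⊤ := by
  show ∫⁻ t in Ioi 0, ENNReal.ofReal
    (∏ i, scaledPowerBesselDensity (Iν (ν i)) α (ν i) (σ i) (x i) (y i) t) < ⊤
  have hI0 i := isBigO_rpow_nhdsGT_zero_of_tendsto_div (hasym0 i)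
  choose E hE using fun i =>
    eventually_abs_scaledPowerBesselDensity_le_rpow (α := α) (hx i) (hy i) (hσ i).ne' (hI0 i)
  choose C hC hCI using fun i => exists_forall_abs_le_rpow_add_exp (hcont i) (hI0 i)
    (isBigO_exp_atTop_of_tendsto_div (hasymInf i))
  choose D hD hDI using fun i => exists_abs_scaledPowerBesselDensity_le (α := α) (hx i) (hy i)
    (hσ i).ne' (hν i) (hC i) (hCI i) (m := ⌈ν i⌉₊ + 1)
    (by push_cast; linarith [Nat.le_ceil (ν i)]) (by omega)
  exact setLIntegral_ofReal_Ioi_lt_top (one_lt_sum_one_add_of_mean hrec)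
    (exists_forall_prod_le_of_abs_le_pow_mul_exp hD (sum_sq_rpow_sub_rpow_div_pos hα
      (fun i => (hσ i).ne') (fun i => (hx i).le) (fun i => (hy i).le) hxy) hDI)
    (exists_eventually_prod_le_rpow_of_abs_le hE)

/-- For the transition density of `n` independent scaled powered Bessel
processes with indices `ν i > -1`, scales `σ i > 0` and power `α ≠ 0`, if
`2n(ν̄ + 1) > 2` (where `ν̄ = (ν₁ + ⋯ + ν_n)/n`) then the potential
`∫₀^∞ p_t(x,y) dt` is finite for `x ≠ y` with strictly positive coordinates, using
the asymptotics `I_ν(z) ~ z^ν/(2^ν Γ(1+ν))` as `z → 0+` and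
`I_ν(z) ~ e^z/√(2πz)` as `z → ∞` of the modified Bessel function `I_ν` of the first
kind. -/
theorem free_scaled_power_bessel_transient (n : ℕ) (hn : 1 ≤ n)
    (α : ℝ) (hα : α ≠ 0)
    (ν σ : Fin n → ℝ) (hν : ∀ i, -1 < ν i) (hσ : ∀ i, 0 < σ i)
    (Iν : ℝ → ℝ → ℝ)
    (hcont : ∀ i, ContinuousOn (Iν (ν i)) (Set.Ioi 0))
    (hasym0 : ∀ i, Filter.Tendsto
      (fun z : ℝ => Iν (ν i) z / (z ^ ν i / ((2 : ℝ) ^ ν i * Real.Gamma (1 + ν i))))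
      (nhdsWithin 0 (Set.Ioi 0)) (nhds 1))
    (hasymInf : ∀ i, Filter.Tendsto
      (fun z : ℝ => Iν (ν i) z / (Real.exp z / Real.sqrt (2 * π * z)))
      Filter.atTop (nhds 1))
    (x y : Fin n → ℝ) (hx : ∀ i, 0 < x i) (hy : ∀ i, 0 < y i) (hxy : x ≠ y)
    (hrec : 2 * (n : ℝ) * ((∑ i, ν i) / n + 1) > 2) :
    ∫⁻ t in Set.Ioi (0 : ℝ),
        ENNReal.ofReal (∏ i : Fin n,
          (1 / α) * y i ^ (1 / α - 1) * (x i ^ (1 / α) / (σ i ^ 2 * t)) *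
            (y i / x i) ^ ((ν i + 1) / α) *
            Iν (ν i) ((x i * y i) ^ (1 / α) / (σ i ^ 2 * t)) *
            Real.exp (-(x i ^ (2 / α) + y i ^ (2 / α)) / (2 * σ i ^ 2 * t)))
        ∂volume < ⊤ :=
  free_scaled_power_bessel_transient_general n α hα ν σ hν hσ Iν hcont hasym0 hasymInf x y hx hy hxy
    hrec
end
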